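/- arXiv:2012.14793 — 2 statements merged into one kernel-verified Lean document; each statement's English description precedes it below -/
import Mathlib

section
/- The rational function r_p(t) = -∑_{m,l=0}^{p-1} Ω_{ml} ⊗ (-1)^m binom(m+l, l) t^{-1-m-l} satisfies the classical Yang–Baxter equation in g_p^{⊗3}: [r_p^{(12)}(t₁-t₂), r_p^{(13)}(t₁-t₃)] + [r_p^{(13)}(t₁-t₃), r_p^{(23)}(t₂-t₃)] + [r_p^{(12)}(t₁-t₂), r_p^{(23)}(t₂-t₃)] = 0 for pairwise distinct t₁, t₂, t₃ ∈ ℂ. -/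
set_option synthInstance.maxHeartbeats 1000000
set_option maxHeartbeats 1600000

open scoped TensorProduct
open Finset

/-- Scalar extension of a complex Lie algebra is a complex Lie algebra. -/
noncomputable instance (priority := low) extendScalarsLieAlgebraOverBase
    {A g : Type*} [CommRing A] [Algebra ℂ A] [LieRing g] [LieAlgebra ℂ g] :
    LieAlgebra ℂ (A ⊗[ℂ] g) :=
  { lie_smul := fun c x y => by
      rw [← algebraMap_smul A c y, lie_smul, algebraMap_smul] }

/-- The ring `ℂ[z]/(z^p)` of truncated polynomials. -/
noncomputable abbrev TruncPoly (p : ℕ) : Type :=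
  Polynomial ℂ ⧸ Ideal.span {(Polynomial.X : Polynomial ℂ) ^ p}

/-- The class of `z^m` in `ℂ[z]/(z^p)`. -/
noncomputable def zpow (p m : ℕ) : TruncPoly p :=
  Ideal.Quotient.mk _ ((Polynomial.X : Polynomial ℂ) ^ m)

/-- The truncated current Lie algebra `g_p = g[z]/z^p g[z]`. -/
noncomputable abbrev TruncCurrent (p : ℕ) (g : Type*) [LieRing g] [LieAlgebra ℂ g] :=
  (TruncPoly p) ⊗[ℂ] g

section

variable (p : ℕ) {g : Type*} [LieRing g] [LieAlgebra ℂ g]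
  {ι : Type*} [Fintype ι] (b b' : ι → g)

/-- The enveloping algebra `U(g_p)` of the truncated current algebra. -/
noncomputable abbrev UEnv := UniversalEnvelopingAlgebra ℂ (TruncCurrent p g)

/-- The triple tensor power `U(g_p)^{⊗3}`. -/
noncomputable abbrev UEnv3 := (UEnv p (g := g) ⊗[ℂ] UEnv p (g := g)) ⊗[ℂ] UEnv p (g := g)

/-- The image `X z^m` of a basis element in `U(g_p)`. -/
noncomputable def cur (m : ℕ) (x : g) : UEnv p (g := g) :=
  UniversalEnvelopingAlgebra.ι ℂ (zpow p m ⊗ₜ[ℂ] x)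

/-- `r_p^{(12)}(t)`: the rational `r`-matrix placed in slots 1 and 2 of `U(g_p)^{⊗3}`. -/
noncomputable def r12 (t : ℂ) : UEnv3 p (g := g) :=
  -∑ m ∈ range p, ∑ l ∈ range p, (((-1 : ℂ) ^ m * ((m + l).choose l : ℂ)
      * t ^ (-(1 : ℤ) - m - l)) •
    ∑ k, (cur p m (b k) ⊗ₜ[ℂ] cur p l (b' k)) ⊗ₜ[ℂ] (1 : UEnv p (g := g)))

/-- `r_p^{(13)}(t)`: the rational `r`-matrix placed in slots 1 and 3 of `U(g_p)^{⊗3}`. -/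
noncomputable def r13 (t : ℂ) : UEnv3 p (g := g) :=
  -∑ m ∈ range p, ∑ l ∈ range p, (((-1 : ℂ) ^ m * ((m + l).choose l : ℂ)
      * t ^ (-(1 : ℤ) - m - l)) •
    ∑ k, (cur p m (b k) ⊗ₜ[ℂ] (1 : UEnv p (g := g))) ⊗ₜ[ℂ] cur p l (b' k))

/-- `r_p^{(23)}(t)`: the rational `r`-matrix placed in slots 2 and 3 of `U(g_p)^{⊗3}`. -/
noncomputable def r23 (t : ℂ) : UEnv3 p (g := g) :=
  -∑ m ∈ range p, ∑ l ∈ range p, (((-1 : ℂ) ^ m * ((m + l).choose l : ℂ)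
      * t ^ (-(1 : ℤ) - m - l)) •
    ∑ k, ((1 : UEnv p (g := g)) ⊗ₜ[ℂ] cur p m (b k)) ⊗ₜ[ℂ] cur p l (b' k))

end

/-! Write `u_i = t_i + z_i`, where `z_i` is the variable `z` of the `i`-th tensor factor. Then
`r_p^{(ij)}(t_i - t_j) = -Ω^{(ij)} / (u_i - u_j)`: the coefficients of `r_p` are those of the
expansion of `1 / (t + z_i - z_j)` in the nilpotent `z`'s, so `e_ij := ∑ rCoeff • z_i^m z_j^l` is a
genuine inverse of `u_i - u_j` in `ℂ[z₁, z₂, z₃] / (z₁^p, z₂^p, z₃^p)`. A commutator of two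
`r`-matrices is the product of their coefficient series paired with a commutator of two `Ω`'s
computed in `g^{⊗3}`, and by the invariance of `Ω` the three commutators that occur are `-T`,
`-T` and `T` for one tensor `T`. The Yang–Baxter equation thereby reduces to the partial fraction
identity `e₁₂ e₂₃ = e₁₂ e₁₃ + e₁₃ e₂₃`, which follows from `u₁₂ + u₂₃ = u₁₃`. -/

section TruncatedSums

variable {K S : Type*} [CommSemiring K] [CommSemiring S] [Algebra K S]

noncomputable def truncEval (p : ℕ) (a b : S) : (ℕ → ℕ → K) →ₗ[K] S :=
  ∑ m ∈ range p, ∑ l ∈ range p,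
    ((LinearMap.proj l : (ℕ → K) →ₗ[K] K) ∘ₗ LinearMap.proj m).smulRight (a ^ m * b ^ l)

lemma truncEval_apply (p : ℕ) (a b : S) (f : ℕ → ℕ → K) :
    truncEval p a b f = ∑ m ∈ range p, ∑ l ∈ range p, f m l • (a ^ m * b ^ l) := by
  simp [truncEval]

lemma truncEval_delta (p : ℕ) (a b : S) (ha : a ^ p = 0) :
    truncEval p a b (fun m l => if m = 0 ∧ l = 0 then (1 : K) else 0) = 1 := by
  cases p with
  | zero => exact (subsingleton_of_zero_eq_one (ha.symm.trans (pow_zero a))).elim _ _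
  | succ q => simp [truncEval_apply, ite_and, Finset.sum_ite_eq']

lemma mul_truncEval_left (p : ℕ) (a b : S) (ha : a ^ p = 0) (f : ℕ → ℕ → K) :
    a * truncEval p a b f = truncEval p a b (fun m l => if m = 0 then 0 else f (m - 1) l) := by
  cases p with
  | zero => simp [truncEval_apply]
  | succ q =>
    rw [truncEval_apply, truncEval_apply, Finset.mul_sum]
    conv_lhs => rw [sum_range_succ]
    conv_rhs => rw [sum_range_succ']
    simp [Finset.mul_sum, ← mul_assoc, ← pow_succ', ha]

lemma truncEval_swap (p : ℕ) (a b : S) (f : ℕ → ℕ → K) :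
    truncEval p a b f = truncEval p b a (fun l m => f m l) := by
  rw [truncEval_apply, truncEval_apply, Finset.sum_comm]
  simp only [mul_comm]

lemma mul_truncEval_right (p : ℕ) (a b : S) (hb : b ^ p = 0) (f : ℕ → ℕ → K) :
    b * truncEval p a b f = truncEval p a b (fun m l => if l = 0 then 0 else f m (l - 1)) := by
  rw [truncEval_swap, mul_truncEval_left p b a hb, truncEval_swap]

end TruncatedSums

section RationalCoefficients

variable {K S : Type*} [Field K] [CommRing S] [Algebra K S]

/-- The coefficient of `a^m b^l` in `1 / (t + a - b)`; these are the coefficients of `r_p(t)`. -/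
noncomputable def rCoeff (t : K) (m l : ℕ) : K :=
  (-1 : K) ^ m * ((m + l).choose l : K) * t ^ (-(1 : ℤ) - m - l)

lemma rCoeff_eq_div (t : K) (m l : ℕ) :
    rCoeff t m l = (-1 : K) ^ m * ((m + l).choose l : K) / t ^ (m + l + 1) := by
  rw [rCoeff, div_eq_mul_inv, ← zpow_natCast t, ← zpow_neg]
  push_cast
  ring_nf

lemma rCoeff_rec {t : K} (ht : t ≠ 0) (m l : ℕ) :
    t * rCoeff t m l + (if m = 0 then 0 else rCoeff t (m - 1) l)
      - (if l = 0 then 0 else rCoeff t m (l - 1)) = if m = 0 ∧ l = 0 then 1 else 0 := by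
  rcases m with _ | m <;> rcases l with _ | l <;>
    simp only [rCoeff_eq_div, Nat.add_sub_cancel, Nat.add_eq_zero_iff, one_ne_zero, and_false,
      and_true, ↓reduceIte, zero_add, add_zero, sub_zero, Nat.choose_self, Nat.choose_zero_right,
      pow_zero, pow_succ, Nat.cast_one]
  · field_simp
  · field_simp; ring
  · field_simp; ring
  · rw [show m + 1 + (l + 1) = m + l + 1 + 1 by ring, Nat.choose_succ_succ,
      show m + (l + 1) = m + l + 1 by ring, show m + 1 + l = m + l + 1 by ring]
    push_cast
    field_simp
    ring

lemma mul_truncEval_rCoeff (p : ℕ) {t : K} (ht : t ≠ 0) {a b : S} (ha : a ^ p = 0)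
    (hb : b ^ p = 0) : (algebraMap K S t + a - b) * truncEval p a b (rCoeff t) = 1 := by
  calc (algebraMap K S t + a - b) * truncEval p a b (rCoeff t)
      = t • truncEval p a b (rCoeff t) + a * truncEval p a b (rCoeff t)
          - b * truncEval p a b (rCoeff t) := by rw [Algebra.smul_def]; ring
    _ = truncEval p a b (t • rCoeff t + (fun m l => if m = 0 then (0 : K) else rCoeff t (m - 1) l)
          - fun m l => if l = 0 then (0 : K) else rCoeff t m (l - 1)) := by
      rw [mul_truncEval_left p a b ha, mul_truncEval_right p a b hb, map_sub, map_add, map_smul]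
    _ = truncEval p a b (fun m l => if m = 0 ∧ l = 0 then (1 : K) else 0) := by
      congr 1
      funext m l
      exact rCoeff_rec ht m l
    _ = 1 := truncEval_delta p a b ha

end RationalCoefficients

lemma mul_eq_mul_add_mul_of_mul_eq_one {R : Type*} [CommRing R] {u v w e₁ e₂ e₃ : R}
    (h₁ : u * e₁ = 1) (h₂ : v * e₂ = 1) (h₃ : w * e₃ = 1) (huvw : u + v = w) :
    e₁ * e₂ = e₁ * e₃ + e₃ * e₂ := by
  subst huvw
  linear_combination e₂ * e₃ * h₁ + e₁ * e₃ * h₂ - e₁ * e₂ * h₃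

section LieSums

variable {K A S : Type*} [CommRing K] [Ring A] [Algebra K A] [Semiring S] [Algebra K S]

lemma lie_sum_eq_map_mul {α β : Type*} (Φ : S →ₗ[K] A) (s : Finset α) (t : Finset β)
    (X : α → A) (Y : β → A) (x : α → S) (y : β → S)
    (h : ∀ i j, ⁅X i, Y j⁆ = Φ (x i * y j)) :
    ⁅∑ i ∈ s, X i, ∑ j ∈ t, Y j⁆ = Φ ((∑ i ∈ s, x i) * ∑ j ∈ t, y j) := by
  let _ : LieRing A := LieRing.ofAssociativeRing
  simp only [sum_lie_sum, Finset.sum_mul_sum, map_sum, h]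

lemma lie_neg_sum_smul_eq_map_mul (Φ : S →ₗ[K] A) (P : Finset ℕ) (f h : ℕ → ℕ → K)
    (X Y : ℕ → ℕ → A) (x y : ℕ → ℕ → S)
    (hXY : ∀ m l m' l', ⁅X m l, Y m' l'⁆ = Φ (x m l * y m' l')) :
    ⁅-∑ m ∈ P, ∑ l ∈ P, f m l • X m l, -∑ m ∈ P, ∑ l ∈ P, h m l • Y m l⁆
      = Φ ((∑ m ∈ P, ∑ l ∈ P, f m l • x m l) * ∑ m ∈ P, ∑ l ∈ P, h m l • y m l) := by
  let _ : LieRing A := LieRing.ofAssociativeRing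
  rw [neg_lie, lie_neg, neg_neg]
  refine lie_sum_eq_map_mul Φ _ _ _ _ _ _ fun m m' => ?_
  refine lie_sum_eq_map_mul Φ _ _ _ _ _ _ fun l l' => ?_
  rw [smul_lie, lie_smul (R := K), hXY, smul_mul_smul_comm, map_smul, smul_smul]

end LieSums

/-- Instance search does not find this through nested tensor products such as
`(TruncPoly p ⊗[ℂ] TruncPoly p) ⊗[ℂ] TruncPoly p`. -/
noncomputable instance (p : ℕ) : CommRing (TruncPoly p) := Ideal.Quotient.commRing _

abbrev TruncPoly3 (p : ℕ) : Type := (TruncPoly p ⊗[ℂ] TruncPoly p) ⊗[ℂ] TruncPoly p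

section TruncPoly3

variable (p : ℕ)

noncomputable def z₁ : TruncPoly3 p := (zpow p 1 ⊗ₜ 1) ⊗ₜ 1

noncomputable def z₂ : TruncPoly3 p := (1 ⊗ₜ zpow p 1) ⊗ₜ 1

noncomputable def z₃ : TruncPoly3 p := (1 ⊗ₜ 1) ⊗ₜ zpow p 1

lemma zpow_eq_zpow_one_pow (m : ℕ) : zpow p m = zpow p 1 ^ m := by
  rw [zpow, zpow, pow_one, map_pow]

lemma zpow_mul_zpow (m l : ℕ) : zpow p m * zpow p l = zpow p (m + l) := by
  rw [zpow, zpow, zpow, ← map_mul, ← pow_add]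

lemma zpow_self : zpow p p = 0 :=
  Ideal.Quotient.eq_zero_iff_mem.2 (Ideal.mem_span_singleton_self _)

lemma z_monomial (m l n : ℕ) :
    z₁ p ^ m * z₂ p ^ l * z₃ p ^ n = (zpow p m ⊗ₜ zpow p l) ⊗ₜ zpow p n := by
  simp [z₁, z₂, z₃, Algebra.TensorProduct.tmul_pow, Algebra.TensorProduct.tmul_mul_tmul,
    zpow_eq_zpow_one_pow p m, zpow_eq_zpow_one_pow p l, zpow_eq_zpow_one_pow p n]

lemma z₁_pow_self : z₁ p ^ p = 0 := by
  simpa [zpow_self] using z_monomial p p 0 0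

lemma z₂_pow_self : z₂ p ^ p = 0 := by
  simpa [zpow_self] using z_monomial p 0 p 0

lemma z₃_pow_self : z₃ p ^ p = 0 := by
  simpa [zpow_self] using z_monomial p 0 0 p

end TruncPoly3

section OmegaBrackets

attribute [local instance] LieRing.ofAssociativeRing

variable (p : ℕ) {g : Type*} [LieRing g] [LieAlgebra ℂ g]

noncomputable def cur₃ : ((g ⊗[ℂ] g) ⊗[ℂ] g) →ₗ[ℂ] TruncPoly3 p →ₗ[ℂ] UEnv3 p (g := g) :=
  let ι := (UniversalEnvelopingAlgebra.ι ℂ (L := TruncCurrent p g)).toLinearMap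
  (TensorProduct.curry (TensorProduct.map (TensorProduct.map ι ι) ι ∘ₗ
    TensorProduct.map (TensorProduct.tensorTensorTensorComm ℂ _ _ _ _).toLinearMap LinearMap.id ∘ₗ
    (TensorProduct.tensorTensorTensorComm ℂ _ _ _ _).toLinearMap)).flip

lemma cur₃_monomial (x y w : g) (m l n : ℕ) :
    cur₃ p ((x ⊗ₜ y) ⊗ₜ w) (z₁ p ^ m * z₂ p ^ l * z₃ p ^ n)
      = (cur p m x ⊗ₜ cur p l y) ⊗ₜ cur p n w := by
  rw [z_monomial]
  rfl

lemma cur_lie (m l : ℕ) (x y : g) : ⁅cur p m x, cur p l y⁆ = cur p (m + l) ⁅x, y⁆ := by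
  rw [cur, cur, cur, ← LieHom.map_lie, LieAlgebra.ExtendScalars.bracket_tmul, zpow_mul_zpow]

variable {ι : Type*} [Fintype ι] (b b' : ι → g)

noncomputable def omegaLie₁₂₁₃ : (g ⊗[ℂ] g) ⊗[ℂ] g := ∑ k, ∑ j, (⁅b k, b j⁆ ⊗ₜ b' k) ⊗ₜ b' j

noncomputable def omegaLie₁₃₂₃ : (g ⊗[ℂ] g) ⊗[ℂ] g := ∑ k, ∑ j, (b k ⊗ₜ b j) ⊗ₜ ⁅b' k, b' j⁆

noncomputable def omegaLie₁₂₂₃ : (g ⊗[ℂ] g) ⊗[ℂ] g := ∑ k, ∑ j, (b k ⊗ₜ ⁅b' k, b j⁆) ⊗ₜ b' j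

lemma lie_omega₁₂_omega₁₃ (m l m' l' : ℕ) :
    ⁅∑ k, (cur p m (b k) ⊗ₜ[ℂ] cur p l (b' k)) ⊗ₜ[ℂ] (1 : UEnv p (g := g)),
      ∑ k, (cur p m' (b k) ⊗ₜ[ℂ] (1 : UEnv p (g := g))) ⊗ₜ[ℂ] cur p l' (b' k)⁆
    = cur₃ p (omegaLie₁₂₁₃ b b') (z₁ p ^ m * z₂ p ^ l * (z₁ p ^ m' * z₃ p ^ l')) := by
  rw [show z₁ p ^ m * z₂ p ^ l * (z₁ p ^ m' * z₃ p ^ l')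
      = z₁ p ^ (m + m') * z₂ p ^ l * z₃ p ^ l' by ring]
  simp only [omegaLie₁₂₁₃, map_sum, LinearMap.sum_apply, cur₃_monomial, sum_lie_sum, ← cur_lie]
  simp only [LieRing.of_associative_ring_bracket, Algebra.TensorProduct.tmul_mul_tmul, mul_one,
    one_mul, TensorProduct.sub_tmul]

lemma lie_omega₁₃_omega₂₃ (m l m' l' : ℕ) :
    ⁅∑ k, (cur p m (b k) ⊗ₜ[ℂ] (1 : UEnv p (g := g))) ⊗ₜ[ℂ] cur p l (b' k),
      ∑ k, ((1 : UEnv p (g := g)) ⊗ₜ[ℂ] cur p m' (b k)) ⊗ₜ[ℂ] cur p l' (b' k)⁆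
    = cur₃ p (omegaLie₁₃₂₃ b b') (z₁ p ^ m * z₃ p ^ l * (z₂ p ^ m' * z₃ p ^ l')) := by
  rw [show z₁ p ^ m * z₃ p ^ l * (z₂ p ^ m' * z₃ p ^ l')
      = z₁ p ^ m * z₂ p ^ m' * z₃ p ^ (l + l') by ring]
  simp only [omegaLie₁₃₂₃, map_sum, LinearMap.sum_apply, cur₃_monomial, sum_lie_sum, ← cur_lie]
  simp only [LieRing.of_associative_ring_bracket, Algebra.TensorProduct.tmul_mul_tmul, mul_one,
    one_mul, TensorProduct.tmul_sub]

lemma lie_omega₁₂_omega₂₃ (m l m' l' : ℕ) :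
    ⁅∑ k, (cur p m (b k) ⊗ₜ[ℂ] cur p l (b' k)) ⊗ₜ[ℂ] (1 : UEnv p (g := g)),
      ∑ k, ((1 : UEnv p (g := g)) ⊗ₜ[ℂ] cur p m' (b k)) ⊗ₜ[ℂ] cur p l' (b' k)⁆
    = cur₃ p (omegaLie₁₂₂₃ b b') (z₁ p ^ m * z₂ p ^ l * (z₂ p ^ m' * z₃ p ^ l')) := by
  rw [show z₁ p ^ m * z₂ p ^ l * (z₂ p ^ m' * z₃ p ^ l')
      = z₁ p ^ m * z₂ p ^ (l + m') * z₃ p ^ l' by ring]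
  simp only [omegaLie₁₂₂₃, map_sum, LinearMap.sum_apply, cur₃_monomial, sum_lie_sum, ← cur_lie]
  simp only [LieRing.of_associative_ring_bracket, Algebra.TensorProduct.tmul_mul_tmul, mul_one,
    one_mul, TensorProduct.sub_tmul, TensorProduct.tmul_sub]

end OmegaBrackets

section RBrackets

variable (p : ℕ) {g : Type*} [LieRing g] [LieAlgebra ℂ g] {ι : Type*} [Fintype ι] (b b' : ι → g)

lemma lie_r12_r13 (s u : ℂ) :
    ⁅r12 p b b' s, r13 p b b' u⁆ = cur₃ p (omegaLie₁₂₁₃ b b')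
      (truncEval p (z₁ p) (z₂ p) (rCoeff s) * truncEval p (z₁ p) (z₃ p) (rCoeff u)) := by
  rw [truncEval_apply, truncEval_apply]
  refine lie_neg_sum_smul_eq_map_mul (S := TruncPoly3 p) (A := UEnv3 p (g := g))
    (cur₃ p (omegaLie₁₂₁₃ b b')) _ (rCoeff s) (rCoeff u) _ _ _ _ ?_
  exact lie_omega₁₂_omega₁₃ p b b'

lemma lie_r13_r23 (u v : ℂ) :
    ⁅r13 p b b' u, r23 p b b' v⁆ = cur₃ p (omegaLie₁₃₂₃ b b')
      (truncEval p (z₁ p) (z₃ p) (rCoeff u) * truncEval p (z₂ p) (z₃ p) (rCoeff v)) := by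
  rw [truncEval_apply, truncEval_apply]
  refine lie_neg_sum_smul_eq_map_mul (S := TruncPoly3 p) (A := UEnv3 p (g := g))
    (cur₃ p (omegaLie₁₃₂₃ b b')) _ (rCoeff u) (rCoeff v) _ _ _ _ ?_
  exact lie_omega₁₃_omega₂₃ p b b'

lemma lie_r12_r23 (s v : ℂ) :
    ⁅r12 p b b' s, r23 p b b' v⁆ = cur₃ p (omegaLie₁₂₂₃ b b')
      (truncEval p (z₁ p) (z₂ p) (rCoeff s) * truncEval p (z₂ p) (z₃ p) (rCoeff v)) := by
  rw [truncEval_apply, truncEval_apply]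
  refine lie_neg_sum_smul_eq_map_mul (S := TruncPoly3 p) (A := UEnv3 p (g := g))
    (cur₃ p (omegaLie₁₂₂₃ b b')) _ (rCoeff s) (rCoeff v) _ _ _ _ ?_
  exact lie_omega₁₂_omega₂₃ p b b'

end RBrackets

section Invariance

variable {g : Type*} [LieRing g] [LieAlgebra ℂ g] {B : LinearMap.BilinForm ℂ g}
  {ι : Type*} [Fintype ι] [DecidableEq ι] {b : Module.Basis ι ℂ g} {b' : ι → g}

lemma Module.Basis.eq_sum_bilin_smul_of_dual
    (hdual : ∀ i j, B (b i) (b' j) = if i = j then 1 else 0) (y : g) : y = ∑ i, B y (b' i) • b i := by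
  have hcoord : ∀ i, b.coord i = B.flip (b' i) := fun i =>
    b.ext fun j => by simp [hdual, Finsupp.single_apply]
  conv_lhs => rw [← b.sum_repr y]
  simp only [← b.coord_apply, hcoord]
  rfl

lemma omega_lie_invariant (hBnd : B.Nondegenerate)
    (hBinv : ∀ x y z : g, B ⁅x, y⁆ z = B x ⁅y, z⁆)
    (hdual : ∀ i j, B (b i) (b' j) = if i = j then 1 else 0) (x : g) :
    ∑ k, ⁅x, b k⁆ ⊗ₜ[ℂ] b' k + ∑ k, b k ⊗ₜ[ℂ] ⁅x, b' k⁆ = 0 := by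
  have hleft : ∑ k, ⁅x, b k⁆ ⊗ₜ[ℂ] b' k = ∑ i, b i ⊗ₜ[ℂ] ∑ k, B ⁅x, b k⁆ (b' i) • b' k := by
    conv_lhs => enter [2, k]; rw [Module.Basis.eq_sum_bilin_smul_of_dual hdual ⁅x, b k⁆]
    simp only [TensorProduct.sum_tmul, TensorProduct.tmul_sum, TensorProduct.smul_tmul]
    exact Finset.sum_comm
  rw [hleft, ← Finset.sum_add_distrib]
  refine Finset.sum_eq_zero fun i _ => ?_
  rw [← TensorProduct.tmul_add]
  suffices h : B.flip (∑ k, B ⁅x, b k⁆ (b' i) • b' k + ⁅x, b' i⁆) = 0 by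
    rw [hBnd.2 _ fun z => LinearMap.congr_fun h z, TensorProduct.tmul_zero]
  refine b.ext fun j => ?_
  simp only [map_add, map_sum, map_smul, LinearMap.add_apply, LinearMap.sum_apply,
    LinearMap.smul_apply, LinearMap.BilinForm.flip_apply, smul_eq_mul, hdual, mul_ite, mul_one,
    mul_zero, Finset.sum_ite_eq, Finset.mem_univ, if_true, LinearMap.zero_apply]
  rw [← hBinv, ← lie_skew, map_neg, LinearMap.neg_apply, neg_add_cancel]

/- The two Drinfeld–Kohno relations `[Ω^{(12)}, Ω^{(13)} + Ω^{(23)}] = 0` and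
`[Ω^{(12)} + Ω^{(13)}, Ω^{(23)}] = 0`. -/

lemma omegaLie₁₂₁₃_eq_neg (hBnd : B.Nondegenerate)
    (hBinv : ∀ x y z : g, B ⁅x, y⁆ z = B x ⁅y, z⁆)
    (hdual : ∀ i j, B (b i) (b' j) = if i = j then 1 else 0) :
    omegaLie₁₂₁₃ b b' = -omegaLie₁₂₂₃ b b' := by
  rw [eq_neg_iff_add_eq_zero, omegaLie₁₂₁₃, omegaLie₁₂₂₃, Finset.sum_comm]
  conv_lhs => arg 2; rw [Finset.sum_comm]
  rw [← Finset.sum_add_distrib]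
  refine Finset.sum_eq_zero fun j _ => ?_
  have h := omega_lie_invariant hBnd hBinv hdual (b j)
  simp_rw [← TensorProduct.sum_tmul, ← TensorProduct.add_tmul, ← lie_skew _ (b j),
    TensorProduct.neg_tmul, TensorProduct.tmul_neg, Finset.sum_neg_distrib, ← neg_add, h,
    neg_zero, TensorProduct.zero_tmul]

lemma omegaLie₁₃₂₃_eq_neg (hBnd : B.Nondegenerate)
    (hBinv : ∀ x y z : g, B ⁅x, y⁆ z = B x ⁅y, z⁆)
    (hdual : ∀ i j, B (b i) (b' j) = if i = j then 1 else 0) :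
    omegaLie₁₃₂₃ b b' = -omegaLie₁₂₂₃ b b' := by
  rw [eq_neg_iff_add_eq_zero, omegaLie₁₃₂₃, omegaLie₁₂₂₃, ← Finset.sum_add_distrib]
  refine Finset.sum_eq_zero fun k _ => ?_
  have h := omega_lie_invariant hBnd hBinv hdual (b' k)
  simp_rw [← TensorProduct.assoc_symm_tmul, ← map_sum, ← map_add, ← TensorProduct.tmul_sum,
    ← TensorProduct.tmul_add, add_comm (∑ j, b j ⊗ₜ[ℂ] _), h, TensorProduct.tmul_zero, map_zero]

end Invariance

theorem rMatrix_classical_yang_baxter_general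
    {g : Type*} [LieRing g] [LieAlgebra ℂ g]
    (B : LinearMap.BilinForm ℂ g) (hBnd : B.Nondegenerate)
    (hBinv : ∀ x y z : g, B ⁅x, y⁆ z = B x ⁅y, z⁆)
    {ι : Type*} [Fintype ι] [DecidableEq ι] (b : Module.Basis ι ℂ g) (b' : ι → g)
    (hdual : ∀ i j, B (b i) (b' j) = if i = j then 1 else 0)
    (p : ℕ) (t₁ t₂ t₃ : ℂ)
    (h12 : t₁ ≠ t₂) (h13 : t₁ ≠ t₃) (h23 : t₂ ≠ t₃) :
    ⁅r12 p (⇑b) b' (t₁ - t₂), r13 p (⇑b) b' (t₁ - t₃)⁆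
      + ⁅r13 p (⇑b) b' (t₁ - t₃), r23 p (⇑b) b' (t₂ - t₃)⁆
      + ⁅r12 p (⇑b) b' (t₁ - t₂), r23 p (⇑b) b' (t₂ - t₃)⁆ = 0 := by
  have hpf := mul_eq_mul_add_mul_of_mul_eq_one
    (mul_truncEval_rCoeff (S := TruncPoly3 p) p (sub_ne_zero.2 h12) (z₁_pow_self p) (z₂_pow_self p))
    (mul_truncEval_rCoeff (S := TruncPoly3 p) p (sub_ne_zero.2 h23) (z₂_pow_self p) (z₃_pow_self p))
    (mul_truncEval_rCoeff (S := TruncPoly3 p) p (sub_ne_zero.2 h13) (z₁_pow_self p) (z₃_pow_self p))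
    (by simp only [map_sub]; ring)
  rw [lie_r12_r13, lie_r13_r23, lie_r12_r23, omegaLie₁₂₁₃_eq_neg hBnd hBinv hdual,
    omegaLie₁₃₂₃_eq_neg hBnd hBinv hdual, hpf]
  simp only [map_neg, LinearMap.neg_apply, map_add]
  abel

/-- The rational `r`-matrix `r_p(t) = -∑_{m,l=0}^{p-1} Ω_{ml} (-1)^m binom(m+l,l) t^{-1-m-l}`
satisfies the classical Yang–Baxter equation in `U(g_p)^{⊗3}`:
`[r₁₂(t₁-t₂), r₁₃(t₁-t₃)] + [r₁₃(t₁-t₃), r₂₃(t₂-t₃)] + [r₁₂(t₁-t₂), r₂₃(t₂-t₃)] = 0`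
for pairwise distinct `t₁, t₂, t₃ ∈ ℂ`.  Here `g` is a finite-dimensional simple complex
Lie algebra with nondegenerate invariant symmetric form `B`, and `(Xₖ), (Xᵏ)` are
`B`-dual bases; brackets are commutators in the ring `U(g_p)^{⊗3}`. -/
theorem rMatrix_classical_yang_baxter
    {g : Type*} [LieRing g] [LieAlgebra ℂ g] [Module.Finite ℂ g]
    [LieAlgebra.IsSimple ℂ g]
    (B : LinearMap.BilinForm ℂ g) (hBnd : B.Nondegenerate)
    (hBsymm : ∀ x y : g, B x y = B y x)
    (hBinv : ∀ x y z : g, B ⁅x, y⁆ z = B x ⁅y, z⁆)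
    {ι : Type*} [Fintype ι] [DecidableEq ι] (b : Module.Basis ι ℂ g) (b' : ι → g)
    (hdual : ∀ i j, B (b i) (b' j) = if i = j then 1 else 0)
    (p : ℕ) (hp : 1 ≤ p) (t₁ t₂ t₃ : ℂ)
    (h12 : t₁ ≠ t₂) (h13 : t₁ ≠ t₃) (h23 : t₂ ≠ t₃) :
    ⁅r12 p (⇑b) b' (t₁ - t₂), r13 p (⇑b) b' (t₁ - t₃)⁆
      + ⁅r13 p (⇑b) b' (t₁ - t₃), r23 p (⇑b) b' (t₂ - t₃)⁆
      + ⁅r12 p (⇑b) b' (t₁ - t₂), r23 p (⇑b) b' (t₂ - t₃)⁆ = 0 :=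
  rMatrix_classical_yang_baxter_general B hBnd hBinv b b' hdual p t₁ t₂ t₃ h12 h13 h23
end

section
/- In the completed enveloping algebra of the affine Lie algebra of g at noncritical level κ ≠ -h^∨, the Sugawara operator L_{-1} = (1/(2(κ+h^∨))) ∑_{j ∈ ℤ} ∑_k :X_k z^{-j} X^k z^{j-1}: satisfies [L_{-1}, X z^m] = -m X z^{m-1} for all X ∈ g and m ∈ ℤ. -/
open Finset

/-- A smooth representation of the affine Lie algebra `ĝ = g((z)) ⊕ ℂK` of level `κ`,
recorded through the action operators of the elements `X z^n`: the bracket is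
`[X z^m, Y z^n] = [X,Y] z^{m+n} + m δ_{m+n,0} (X|Y) K`, the central element `K` acts by
the scalar `κ`, and every vector is annihilated by `z^N g[[z]]` for `N ≫ 0`. -/
structure AffineRepresentation (g : Type*) [LieRing g] [LieAlgebra ℂ g]
    (B : LinearMap.BilinForm ℂ g) (κ : ℂ)
    (M : Type*) [AddCommGroup M] [Module ℂ M] where
  /-- The action of `X z^n`. -/
  act : g →ₗ[ℂ] ℤ → Module.End ℂ M
  /-- The affine commutation relations, with the central element acting as `κ`. -/
  comm : ∀ (X Y : g) (m n : ℤ) (v : M),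
    act X m (act Y n v) - act Y n (act X m v)
      = act ⁅X, Y⁆ (m + n) v + (if m + n = 0 then (m : ℂ) * B X Y * κ else 0) • v
  /-- Smoothness: every vector is annihilated by `z^N g[[z]]` for `N ≫ 0`. -/
  smooth : ∀ (v : M) (X : g), ∃ N : ℕ, ∀ n : ℤ, (N : ℤ) ≤ n → act X n v = 0

variable {g : Type*} [LieRing g] [LieAlgebra ℂ g]
  {B : LinearMap.BilinForm ℂ g} {κ : ℂ}
  {M : Type*} [AddCommGroup M] [Module ℂ M]

/-- The action of the Sugawara operator
`L₋₁ = (2(κ+h^∨))⁻¹ ∑_{j ∈ ℤ} ∑ₖ :Xₖ z^{-j} Xᵏ z^{j-1}:` on a smooth module, where the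
normal ordering places the operators attached to nonnegative powers of `z` to the right;
on each vector only finitely many summands are nonzero. -/
noncomputable def sugawaraLneg1 (ρ : AffineRepresentation g B κ M)
    {ι : Type*} [Fintype ι] (b b' : ι → g) (h : ℂ) (v : M) : M :=
  (2 * (κ + h))⁻¹ •
    ∑ᶠ j : ℤ, ∑ k, (if 1 ≤ j
      then ρ.act (b k) (-j) (ρ.act (b' k) (j - 1) v)
      else ρ.act (b' k) (j - 1) (ρ.act (b k) (-j) v))

/-!
Commuting `X z^m` past the `j`-th normal-ordered summand `∑ₖ :Xₖ z^{-j} Xᵏ z^{j-1}:` gives, by the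
invariance of the Casimir tensor `∑ₖ Xₖ ⊗ Xᵏ`, a difference `C (j + m) - C j` of the contractions
`C i = ∑ₖ Xₖ z^{m-i} [Xᵏ, X] z^{i-1}`, multiplied in the order of that summand, plus central terms
adding up to `-2mκ X z^{m-1}`. Summed over `j` these differences telescope, except for the `|m|`
indices `i` between `0` and `m`, where `C i` occurs in both orders. The two orders differ by
`∑ₖ [Xₖ, [Xᵏ, X]] z^{m-1} = 2h^∨ X z^{m-1}`, which contributes `-2m h^∨ X z^{m-1}`.
-/

section IntervalSums

variable {α : Type*} [AddCommGroup α] (f : ℤ → α)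

theorem sum_Ioc_comp_add_right (a b m : ℤ) :
    ∑ j ∈ Ioc a b, f (j + m) = ∑ i ∈ Ioc (a + m) (b + m), f i := by
  rw [← map_add_right_Ioc, sum_map]
  rfl

theorem sum_Ioc_sub_sum_Ioc_of_le {a b c : ℤ} (ha : a ≤ c) (hb : b ≤ c) :
    ∑ i ∈ Ioc a c, f i - ∑ i ∈ Ioc b c, f i = ∑ i ∈ Ioc a b, f i - ∑ i ∈ Ioc b a, f i := by
  rcases le_total a b with hab | hba
  · rw [← Ioc_union_Ioc_eq_Ioc hab hb, sum_union (Ioc_disjoint_Ioc_of_le le_rfl),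
      Ioc_eq_empty_of_le hab, sum_empty]
    abel
  · rw [← Ioc_union_Ioc_eq_Ioc hba ha, sum_union (Ioc_disjoint_Ioc_of_le le_rfl),
      Ioc_eq_empty_of_le hba, sum_empty]
    abel

theorem sum_Ioc_sub_sum_Ioc_of_ge {a b c : ℤ} (ha : c ≤ a) (hb : c ≤ b) :
    ∑ i ∈ Ioc c a, f i - ∑ i ∈ Ioc c b, f i = ∑ i ∈ Ioc b a, f i - ∑ i ∈ Ioc a b, f i := by
  rcases le_total a b with hab | hba
  · rw [← Ioc_union_Ioc_eq_Ioc ha hab, sum_union (Ioc_disjoint_Ioc_of_le le_rfl),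
      Ioc_eq_empty_of_le hab, sum_empty]
    abel
  · rw [← Ioc_union_Ioc_eq_Ioc hb hba, sum_union (Ioc_disjoint_Ioc_of_le le_rfl),
      Ioc_eq_empty_of_le hba, sum_empty]
    abel

theorem sum_Ioc_sub_shift_of_eq_zero_above {K : ℤ} (hf : ∀ i, K < i → f i = 0) {a b m : ℤ}
    (ha : max a (a + m) ≤ K) (hb : K ≤ min b (b + m)) :
    ∑ j ∈ Ioc a b, (f (j + m) - f j) = ∑ i ∈ Ioc (a + m) a, f i - ∑ i ∈ Ioc a (a + m), f i := by
  have trunc : ∀ a' c, K ≤ c → ∑ i ∈ Ioc a' c, f i = ∑ i ∈ Ioc a' K, f i := fun a' c hc =>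
    (sum_subset (Ioc_subset_Ioc_right hc) fun i hi hiK =>
      hf i (by simp only [mem_Ioc] at hi hiK; omega)).symm
  rw [sum_sub_distrib, sum_Ioc_comp_add_right, trunc _ (b + m) (by omega), trunc _ b (by omega),
    sum_Ioc_sub_sum_Ioc_of_le f (by omega) (by omega)]

theorem sum_Ioc_sub_shift_of_eq_zero_below {K : ℤ} (hf : ∀ i, i ≤ K → f i = 0) {a b m : ℤ}
    (ha : max a (a + m) ≤ K) (hb : K ≤ min b (b + m)) :
    ∑ j ∈ Ioc a b, (f (j + m) - f j) = ∑ i ∈ Ioc b (b + m), f i - ∑ i ∈ Ioc (b + m) b, f i := by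
  have trunc : ∀ c c', c ≤ K → ∑ i ∈ Ioc c c', f i = ∑ i ∈ Ioc K c', f i := fun c c' hc =>
    (sum_subset (Ioc_subset_Ioc_left hc) fun i hi hiK =>
      hf i (by simp only [mem_Ioc] at hi hiK; omega)).symm
  rw [sum_sub_distrib, sum_Ioc_comp_add_right, trunc (a + m) _ (by omega), trunc a _ (by omega),
    sum_Ioc_sub_sum_Ioc_of_ge f (by omega) (by omega)]

theorem sum_Ioc_ite_sub_shift (P Q : ℤ → α) (d : α) {m R : ℤ} (hR : 2 * |m| ≤ R)
    (hP : ∀ i, R - |m| < i → P i = 0) (hQ : ∀ i, i ≤ |m| - R → Q i = 0)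
    (hd : ∀ i ∈ Ioc (min m 0) (max m 0), P i - Q i = d) :
    ∑ j ∈ Ioc (-R) R, (if 1 ≤ j then P (j + m) - P j else Q (j + m) - Q j) = (-m) • d := by
  have := le_abs_self m
  have := neg_abs_le m
  rw [← Ioc_union_Ioc_eq_Ioc (by omega : -R ≤ 0) (by omega : 0 ≤ R),
    sum_union (Ioc_disjoint_Ioc_of_le le_rfl),
    sum_congr rfl fun j hj => if_neg (by simp only [mem_Ioc] at hj; omega),
    sum_congr rfl fun j hj => if_pos (by simp only [mem_Ioc] at hj; omega),
    sum_Ioc_sub_shift_of_eq_zero_below Q hQ (by omega) (by omega),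
    sum_Ioc_sub_shift_of_eq_zero_above P hP (by omega) (by omega), zero_add]
  have hwindow : ∑ i ∈ Ioc m 0, (P i - Q i) - ∑ i ∈ Ioc 0 m, (P i - Q i) = (-m) • d := by
    rcases le_total m 0 with hm | hm
    · rw [Ioc_eq_empty_of_le hm, sum_empty, sub_zero,
        sum_congr rfl fun i hi => hd i (by simpa [hm] using hi), sum_const, Int.card_Ioc,
        ← natCast_zsmul]
      congr 1
      omega
    · rw [Ioc_eq_empty_of_le hm, sum_empty, zero_sub,
        sum_congr rfl fun i hi => hd i (by simpa [hm] using hi), sum_const, Int.card_Ioc,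
        ← natCast_zsmul, ← neg_zsmul]
      congr 1
      omega
  rw [← hwindow, sum_sub_distrib, sum_sub_distrib]
  abel

end IntervalSums

namespace LinearMap.BilinForm

section DualBasis

variable {K V ι : Type*} [Field K] [AddCommGroup V] [Module K V] [Fintype ι] [DecidableEq ι]
  {B : LinearMap.BilinForm K V} (hB : B.Nondegenerate) (b : Module.Basis ι K V)

theorem sum_dualBasis_apply_smul (x : V) : ∑ i, B (B.dualBasis hB b i) x • b i = x := by
  conv_rhs => rw [← b.sum_repr x]
  refine sum_congr rfl fun i _ => ?_
  have := dualBasis_repr_apply hB.flip (B.dualBasis hB b) x i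
  rw [dualBasis_flip_dualBasis] at this
  rw [this, flip_apply]

theorem sum_apply_smul_dualBasis (hBs : B.IsSymm) (x : V) :
    ∑ i, B (b i) x • B.dualBasis hB b i = x := by
  conv_rhs => rw [← (B.dualBasis hB b).sum_repr x]
  simp only [dualBasis_repr_apply, hBs.eq x]

end DualBasis

theorem sum_lie_dualBasis {K L ι W : Type*} [Field K] [LieRing L] [LieAlgebra K L]
    [AddCommGroup W] [Module K W] [Fintype ι] [DecidableEq ι]
    {B : LinearMap.BilinForm K L} (hB : B.Nondegenerate) (hBs : B.IsSymm)
    (hBi : B.lieInvariant L) (b : Module.Basis ι K L) (F : L →ₗ[K] L →ₗ[K] W) (x : L) :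
    ∑ i, F ⁅b i, x⁆ (B.dualBasis hB b i) = -∑ i, F (b i) ⁅B.dualBasis hB b i, x⁆ := by
  have hcoeff : ∀ y z, B y ⁅z, x⁆ = -B z ⁅y, x⁆ := fun y z =>
    calc B y ⁅z, x⁆ = -B y ⁅x, z⁆ := by rw [← lie_skew, map_neg]
      _ = B ⁅x, y⁆ z := by rw [hBi]
      _ = -B z ⁅y, x⁆ := by rw [hBs.eq, ← lie_skew, map_neg]
  calc ∑ i, F ⁅b i, x⁆ (B.dualBasis hB b i)
      = ∑ i, ∑ j, B (B.dualBasis hB b j) ⁅b i, x⁆ • F (b j) (B.dualBasis hB b i) := by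
        refine sum_congr rfl fun i _ => ?_
        conv_lhs => rw [← sum_dualBasis_apply_smul hB b ⁅b i, x⁆]
        simp only [map_sum, map_smul, LinearMap.sum_apply, LinearMap.smul_apply]
    _ = -∑ i, ∑ j, B (b i) ⁅B.dualBasis hB b j, x⁆ • F (b j) (B.dualBasis hB b i) := by
        simp only [hcoeff (B.dualBasis hB b _) (b _), neg_smul, sum_neg_distrib]
    _ = -∑ i, F (b i) ⁅B.dualBasis hB b i, x⁆ := by
        rw [sum_comm]
        congr 1
        refine sum_congr rfl fun i _ => ?_
        conv_rhs => rw [← sum_apply_smul_dualBasis hB b hBs ⁅B.dualBasis hB b i, x⁆]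
        simp only [map_sum, map_smul]

end LinearMap.BilinForm

namespace AffineRepresentation

variable (ρ : AffineRepresentation g B κ M)

def actAt (n : ℤ) : g →ₗ[ℂ] Module.End ℂ M := LinearMap.proj n ∘ₗ ρ.act

@[simp]
theorem actAt_apply (n : ℤ) (Y : g) : ρ.actAt n Y = ρ.act Y n := rfl

theorem act_mul_act_sub_act_mul_act (X Y : g) (m n : ℤ) :
    ρ.act X m * ρ.act Y n - ρ.act Y n * ρ.act X m
      = ρ.act ⁅X, Y⁆ (m + n) + (if m + n = 0 then (m : ℂ) * B X Y * κ else 0) • 1 :=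
  LinearMap.ext (ρ.comm X Y m n)

theorem exists_forall_act_eq_zero [Module.Finite ℂ g] (v : M) :
    ∃ N : ℕ, ∀ Y n, (N : ℤ) ≤ n → ρ.act Y n v = 0 := by
  let e := Module.finBasis ℂ g
  choose Nf hNf using fun i => ρ.smooth v (e i)
  refine ⟨univ.sup Nf, fun Y n hn => ?_⟩
  have hle : ∀ i, (Nf i : ℤ) ≤ n := fun i =>
    le_trans (by exact_mod_cast le_sup (f := Nf) (mem_univ i)) hn
  rw [← e.sum_repr Y, ← actAt_apply, map_sum, LinearMap.sum_apply]
  simp [hNf _ n (hle _)]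

variable {ι : Type*} [Fintype ι]

def casimirProduct (c c' : ι → g) (p q : ℤ) : Module.End ℂ M :=
  ∑ i, ρ.act (c i) p * ρ.act (c' i) q

theorem casimirProduct_apply_eq_zero {c c' : ι → g} {p q : ℤ} {v : M}
    (hv : ∀ i, ρ.act (c' i) q v = 0) : ρ.casimirProduct c c' p q v = 0 := by
  simp [casimirProduct, hv]

theorem casimirProduct_sub_casimirProduct (c c' : ι → g) (p q : ℤ) :
    ρ.casimirProduct c c' p q - ρ.casimirProduct c' c q p
      = ρ.act (∑ i, ⁅c i, c' i⁆) (p + q)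
        + (if p + q = 0 then (p : ℂ) * (∑ i, B (c i) (c' i)) * κ else 0) • 1 := by
  rw [casimirProduct, casimirProduct, ← sum_sub_distrib]
  simp only [ρ.act_mul_act_sub_act_mul_act, sum_add_distrib, ← sum_smul]
  congr 1
  · simp only [← actAt_apply, map_sum]
  · split_ifs <;> simp [mul_sum, sum_mul]

theorem casimirProduct_mul_act_sub_act_mul (c c' : ι → g) (X : g) (p q m : ℤ) :
    ρ.casimirProduct c c' p q * ρ.act X m - ρ.act X m * ρ.casimirProduct c c' p q
      = ρ.casimirProduct c (fun i => ⁅c' i, X⁆) p (q + m)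
        + ρ.casimirProduct (fun i => ⁅c i, X⁆) c' (p + m) q
        + (if q + m = 0 then (q : ℂ) * κ else 0) • ∑ i, B (c' i) X • ρ.act (c i) p
        + (if p + m = 0 then (p : ℂ) * κ else 0) • ∑ i, B (c i) X • ρ.act (c' i) q := by
  simp only [casimirProduct, sum_mul, mul_sum, ← sum_sub_distrib, smul_sum, ← sum_add_distrib]
  refine sum_congr rfl fun i _ => ?_
  have hc' := ρ.act_mul_act_sub_act_mul_act (c' i) X q m
  have hc := ρ.act_mul_act_sub_act_mul_act (c i) X p m
  calc ρ.act (c i) p * ρ.act (c' i) q * ρ.act X m - ρ.act X m * (ρ.act (c i) p * ρ.act (c' i) q)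
      = ρ.act (c i) p * (ρ.act (c' i) q * ρ.act X m - ρ.act X m * ρ.act (c' i) q)
        + (ρ.act (c i) p * ρ.act X m - ρ.act X m * ρ.act (c i) p) * ρ.act (c' i) q := by
        noncomm_ring
    _ = _ := by
        rw [hc', hc]
        simp only [mul_add, add_mul, mul_smul_comm, smul_mul_assoc, mul_one, one_mul]
        split_ifs <;> module

def sugawaraTerm (b b' : ι → g) (j : ℤ) : Module.End ℂ M :=
  if 1 ≤ j then ρ.casimirProduct b b' (-j) (j - 1) else ρ.casimirProduct b' b (j - 1) (-j)

theorem sugawaraLneg1_eq_sum (b b' : ι → g) (h : ℂ) {v : M} {N : ℕ} {R : ℤ}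
    (hv : ∀ Y n, (N : ℤ) ≤ n → ρ.act Y n v = 0) (hR : (N : ℤ) ≤ R) :
    sugawaraLneg1 ρ b b' h v = (2 * (κ + h))⁻¹ • ∑ j ∈ Ioc (-R) R, ρ.sugawaraTerm b b' j v := by
  have hterm : ∀ j, ρ.sugawaraTerm b b' j v = ∑ k, (if 1 ≤ j
      then ρ.act (b k) (-j) (ρ.act (b' k) (j - 1) v)
      else ρ.act (b' k) (j - 1) (ρ.act (b k) (-j) v)) := fun j => by
    unfold sugawaraTerm casimirProduct
    split_ifs <;> simp
  have hvanish : ∀ j ∉ Ioc (-R) R, ρ.sugawaraTerm b b' j v = 0 := fun j hj => by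
    simp only [mem_Ioc, not_and_or, not_lt, not_le] at hj
    unfold sugawaraTerm
    split_ifs <;> exact ρ.casimirProduct_apply_eq_zero fun i => hv _ _ (by omega)
  simp only [sugawaraLneg1, ← hterm]
  rw [finsum_eq_sum_of_support_subset _ fun j hj => ?_]
  by_contra hjs
  exact hj (hvanish j (by simpa using hjs))

section DualBasis

variable [DecidableEq ι] (hB : B.Nondegenerate) (b : Module.Basis ι ℂ g)

theorem casimirProduct_lie_dualBasis (hBs : B.IsSymm) (hBi : B.lieInvariant g) (X : g)
    (p q : ℤ) :
    ρ.casimirProduct (fun i => ⁅b i, X⁆) (B.dualBasis hB b) p q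
      = -ρ.casimirProduct b (fun i => ⁅B.dualBasis hB b i, X⁆) p q :=
  B.sum_lie_dualBasis hB hBs hBi b ((LinearMap.mul ℂ _).compl₁₂ (ρ.actAt p) (ρ.actAt q)) X

theorem casimirProduct_dualBasis_lie (hBs : B.IsSymm) (hBi : B.lieInvariant g) (X : g)
    (p q : ℤ) :
    ρ.casimirProduct (B.dualBasis hB b) (fun i => ⁅b i, X⁆) p q
      = -ρ.casimirProduct (fun i => ⁅B.dualBasis hB b i, X⁆) b p q :=
  B.sum_lie_dualBasis hB hBs hBi b ((LinearMap.mul ℂ _).flip.compl₁₂ (ρ.actAt q) (ρ.actAt p)) X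

theorem casimirProduct_basis_dualBasis_mul_act_sub_act_mul (hBs : B.IsSymm)
    (hBi : B.lieInvariant g) (X : g) (p q m : ℤ) :
    ρ.casimirProduct b (B.dualBasis hB b) p q * ρ.act X m
        - ρ.act X m * ρ.casimirProduct b (B.dualBasis hB b) p q
      = ρ.casimirProduct b (fun i => ⁅B.dualBasis hB b i, X⁆) p (q + m)
        - ρ.casimirProduct b (fun i => ⁅B.dualBasis hB b i, X⁆) (p + m) q
        + (if q + m = 0 then (q : ℂ) * κ else 0) • ρ.act X p
        + (if p + m = 0 then (p : ℂ) * κ else 0) • ρ.act X q := by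
  have hexpand : ∀ (c c' : ι → g) (n : ℤ), (∀ Y, ∑ i, B (c i) Y • c' i = Y) →
      ∑ i, B (c i) X • ρ.act (c' i) n = ρ.act X n := fun c c' n hc => by
    conv_rhs => rw [← hc X]
    simp only [← actAt_apply, map_sum, map_smul]
  rw [casimirProduct_mul_act_sub_act_mul, casimirProduct_lie_dualBasis ρ hB b hBs hBi,
    hexpand _ _ _ (B.sum_dualBasis_apply_smul hB b),
    hexpand _ _ _ (B.sum_apply_smul_dualBasis hB b hBs), ← sub_eq_add_neg]

theorem casimirProduct_dualBasis_basis_mul_act_sub_act_mul (hBs : B.IsSymm)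
    (hBi : B.lieInvariant g) (X : g) (p q m : ℤ) :
    ρ.casimirProduct (B.dualBasis hB b) b q p * ρ.act X m
        - ρ.act X m * ρ.casimirProduct (B.dualBasis hB b) b q p
      = ρ.casimirProduct (fun i => ⁅B.dualBasis hB b i, X⁆) b (q + m) p
        - ρ.casimirProduct (fun i => ⁅B.dualBasis hB b i, X⁆) b q (p + m)
        + (if q + m = 0 then (q : ℂ) * κ else 0) • ρ.act X p
        + (if p + m = 0 then (p : ℂ) * κ else 0) • ρ.act X q := by
  have h := ρ.casimirProduct_basis_dualBasis_mul_act_sub_act_mul hB (B.dualBasis hB b) hBs hBi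
    X q p m
  rw [LinearMap.BilinForm.dualBasis_dualBasis hB hBs] at h
  rw [h, casimirProduct_dualBasis_lie ρ hB b hBs hBi, casimirProduct_dualBasis_lie ρ hB b hBs hBi]
  abel

theorem sugawaraTerm_act_sub_act_sugawaraTerm (hBs : B.IsSymm) (hBi : B.lieInvariant g)
    (X : g) (m j : ℤ) (v : M) :
    ρ.sugawaraTerm b (B.dualBasis hB b) j (ρ.act X m v)
        - ρ.act X m (ρ.sugawaraTerm b (B.dualBasis hB b) j v)
      = (if 1 ≤ j
          then ρ.casimirProduct b (fun i => ⁅B.dualBasis hB b i, X⁆) (-j) (j - 1 + m) v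
            - ρ.casimirProduct b (fun i => ⁅B.dualBasis hB b i, X⁆) (m - j) (j - 1) v
          else ρ.casimirProduct (fun i => ⁅B.dualBasis hB b i, X⁆) b (j - 1 + m) (-j) v
            - ρ.casimirProduct (fun i => ⁅B.dualBasis hB b i, X⁆) b (j - 1) (m - j) v)
        + (if j = 1 - m then (-(m : ℂ) * κ) • ρ.act X (m - 1) v else 0)
        + (if j = m then (-(m : ℂ) * κ) • ρ.act X (m - 1) v else 0) := by
  have central : ∀ p q : ℤ, p + q = -1 → (if q + m = 0 then (q : ℂ) * κ else 0) • ρ.act X p v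
      = if q + m = 0 then (-(m : ℂ) * κ) • ρ.act X (m - 1) v else 0 := fun p q hpq => by
    split_ifs with hq
    · rw [show q = -m by omega, show p = m - 1 by omega, Int.cast_neg]
    · exact zero_smul ℂ _
  have hcomm := fun p q => LinearMap.congr_fun
    (ρ.casimirProduct_basis_dualBasis_mul_act_sub_act_mul hB b hBs hBi X p q m) v
  have hcomm' := fun p q => LinearMap.congr_fun
    (ρ.casimirProduct_dualBasis_basis_mul_act_sub_act_mul hB b hBs hBi X p q m) v
  simp only [LinearMap.sub_apply, LinearMap.add_apply, LinearMap.smul_apply,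
    Module.End.mul_apply] at hcomm hcomm'
  unfold sugawaraTerm
  by_cases hj : 1 ≤ j
  · simp only [if_pos hj]
    rw [hcomm, central _ _ (by ring), central _ _ (by ring), show -j + m = m - j by ring]
    simp only [show j - 1 + m = 0 ↔ j = 1 - m by omega, show m - j = 0 ↔ j = m by omega]
  · simp only [if_neg hj]
    rw [hcomm', central _ _ (by ring), central _ _ (by ring), show -j + m = m - j by ring]
    simp only [show j - 1 + m = 0 ↔ j = 1 - m by omega, show m - j = 0 ↔ j = m by omega]

theorem sum_sugawaraTerm_act_sub_act_sugawaraTerm (hBs : B.IsSymm) (hBi : B.lieInvariant g)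
    (h : ℂ) (X : g) (hX : ∑ i, ⁅b i, ⁅B.dualBasis hB b i, X⁆⁆ = (2 * h) • X) (m : ℤ) {v : M}
    {N : ℕ} {R : ℤ} (hv : ∀ Y n, (N : ℤ) ≤ n → ρ.act Y n v = 0) (hR : N + 2 * |m| + 1 ≤ R) :
    ∑ j ∈ Ioc (-R) R, (ρ.sugawaraTerm b (B.dualBasis hB b) j (ρ.act X m v)
        - ρ.act X m (ρ.sugawaraTerm b (B.dualBasis hB b) j v))
      = (2 * (κ + h) * -m) • ρ.act X (m - 1) v := by
  have := le_abs_self m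
  have := neg_abs_le m
  let c : ι → g := fun i => ⁅B.dualBasis hB b i, X⁆
  set P : ℤ → M := fun i => ρ.casimirProduct b c (m - i) (i - 1) v with hP
  set Q : ℤ → M := fun i => ρ.casimirProduct c b (i - 1) (m - i) v with hQ
  have hPQ : ∀ i ∈ Ioc (min m 0) (max m 0), P i - Q i = (2 * h) • ρ.act X (m - 1) v := by
    intro i hi
    have hcas := LinearMap.congr_fun (ρ.casimirProduct_sub_casimirProduct b c (m - i) (i - 1)) v
    simp only [LinearMap.sub_apply, LinearMap.add_apply, LinearMap.smul_apply,
      Module.End.one_apply] at hcas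
    rw [hP, hQ, hcas, hX, show m - i + (i - 1) = m - 1 by ring, ← actAt_apply, map_smul]
    simp only [mem_Ioc] at hi
    split_ifs with hm
    · rw [show m - i = 0 by omega]
      simp
    · simp
  have hterm : ∀ j, ρ.sugawaraTerm b (B.dualBasis hB b) j (ρ.act X m v)
        - ρ.act X m (ρ.sugawaraTerm b (B.dualBasis hB b) j v)
      = (if 1 ≤ j then P (j + m) - P j else Q (j + m) - Q j)
        + (if j = 1 - m then (-(m : ℂ) * κ) • ρ.act X (m - 1) v else 0)
        + (if j = m then (-(m : ℂ) * κ) • ρ.act X (m - 1) v else 0) := fun j => by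
    rw [ρ.sugawaraTerm_act_sub_act_sugawaraTerm hB b hBs hBi]
    simp only [hP, hQ, c, show m - (j + m) = -j by ring, show j + m - 1 = j - 1 + m by ring]
  rw [sum_congr rfl fun j _ => hterm j, sum_add_distrib, sum_add_distrib,
    sum_Ioc_ite_sub_shift P Q _ (by omega)
      (fun i hi => ρ.casimirProduct_apply_eq_zero fun _ => hv _ _ (by omega))
      (fun i hi => ρ.casimirProduct_apply_eq_zero fun _ => hv _ _ (by omega)) hPQ,
    sum_ite_eq', sum_ite_eq', if_pos (by simp only [mem_Ioc]; omega),
    if_pos (by simp only [mem_Ioc]; omega)]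
  module

end DualBasis

end AffineRepresentation

theorem sugawaraLneg1_comm_general
    [Module.Finite ℂ g]
    (hBnd : B.Nondegenerate)
    (hBsymm : ∀ x y : g, B x y = B y x)
    (hBinv : ∀ x y z : g, B ⁅x, y⁆ z = B x ⁅y, z⁆)
    {ι : Type*} [Fintype ι] [DecidableEq ι] (b : Module.Basis ι ℂ g) (b' : ι → g)
    (hdual : ∀ i j, B (b i) (b' j) = if i = j then 1 else 0)
    (h : ℂ) (hcox : ∀ X : g, ∑ k, ⁅b k, ⁅b' k, X⁆⁆ = (2 * h) • X)
    (hκ : κ + h ≠ 0)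
    (ρ : AffineRepresentation g B κ M) (X : g) (m : ℤ) (v : M) :
    sugawaraLneg1 ρ (⇑b) b' h (ρ.act X m v) - ρ.act X m (sugawaraLneg1 ρ (⇑b) b' h v)
      = (-(m : ℂ)) • ρ.act X (m - 1) v := by
  have hBs : B.IsSymm := ⟨hBsymm⟩
  have hBi : B.lieInvariant g := fun x y z => by
    rw [← lie_skew, map_neg, LinearMap.neg_apply, hBinv]
  obtain rfl : ⇑(B.dualBasis hBnd b) = b' :=
    (B.dualBasis_eq_iff hBnd b b').2 fun i j => by rw [← hBsymm, hdual]
  obtain ⟨N₁, hN₁⟩ := ρ.exists_forall_act_eq_zero v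
  obtain ⟨N₂, hN₂⟩ := ρ.exists_forall_act_eq_zero (ρ.act X m v)
  have := abs_nonneg m
  obtain ⟨R, hR₁, hR₂⟩ : ∃ R : ℤ, N₁ + 2 * |m| + 1 ≤ R ∧ N₂ ≤ R :=
    ⟨N₁ + N₂ + 2 * |m| + 1, by omega, by omega⟩
  rw [ρ.sugawaraLneg1_eq_sum _ _ h hN₂ hR₂, ρ.sugawaraLneg1_eq_sum _ _ h hN₁ (R := R) (by omega),
    map_smul, map_sum, ← smul_sub, ← sum_sub_distrib,
    ρ.sum_sugawaraTerm_act_sub_act_sugawaraTerm hBnd b hBs hBi h X (hcox X) m hN₁ hR₁, smul_smul,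
    inv_mul_cancel_left₀ (mul_ne_zero two_ne_zero hκ)]

/-- In (the completed enveloping algebra of) the affine Lie algebra of a simple complex
Lie algebra `g` at noncritical level `κ ≠ -h^∨`, the Sugawara operator `L₋₁` satisfies
`[L₋₁, X z^m] = -m X z^{m-1}` for all `X ∈ g`, `m ∈ ℤ` — here stated as acting on an
arbitrary smooth level-`κ` module.  `(Xₖ)` and `(Xᵏ)` are dual bases of `g` with respect
to the minimal invariant symmetric nondegenerate form `B`, and `h` is the dual Coxeter
number, i.e. half the eigenvalue of the adjoint action of the Casimir. -/
theorem sugawaraLneg1_comm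
    [Module.Finite ℂ g] [LieAlgebra.IsSimple ℂ g]
    (hBnd : B.Nondegenerate)
    (hBsymm : ∀ x y : g, B x y = B y x)
    (hBinv : ∀ x y z : g, B ⁅x, y⁆ z = B x ⁅y, z⁆)
    {ι : Type*} [Fintype ι] [DecidableEq ι] (b : Module.Basis ι ℂ g) (b' : ι → g)
    (hdual : ∀ i j, B (b i) (b' j) = if i = j then 1 else 0)
    (h : ℂ) (hcox : ∀ X : g, ∑ k, ⁅b k, ⁅b' k, X⁆⁆ = (2 * h) • X)
    (hκ : κ + h ≠ 0)
    (ρ : AffineRepresentation g B κ M) (X : g) (m : ℤ) (v : M) :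
    sugawaraLneg1 ρ (⇑b) b' h (ρ.act X m v) - ρ.act X m (sugawaraLneg1 ρ (⇑b) b' h v)
      = (-(m : ℂ)) • ρ.act X (m - 1) v :=
  sugawaraLneg1_comm_general hBnd hBsymm hBinv b b' hdual h hcox hκ ρ X m v
end
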